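/- arXiv:2105.13707 — 2 statements merged into one kernel-verified Lean document; each statement's English description precedes it below -/
import Mathlib

section
/- For a graph G of order n, α'(G) = 2 if and only if either (1) G contains 2K₂ ∪ (n−4)K₁ as a spanning subgraph and is a spanning subgraph of K₄ ∪ (n−4)K₁, or (2) G contains 2K₂ ∪ (n−4)K₁ as a spanning subgraph and is a spanning subgraph of K₂(0,0; n−2). -/
open Finset
open scoped Classical

noncomputable section

/-- A fractional matching of a simple graph `G`: a weight on `Sym2 V` supported on the
edge set, with values in `[0,1]`, such that the total weight at each vertex is at most 1. -/
def SimpleGraph.IsFracMatching {V : Type*} [Fintype V] (G : SimpleGraph V)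
    (f : Sym2 V → ℝ) : Prop :=
  (∀ e, 0 ≤ f e ∧ f e ≤ 1) ∧ (∀ e, e ∉ G.edgeSet → f e = 0) ∧
    ∀ v : V, ∑ e ∈ G.incidenceFinset v, f e ≤ 1

/-- The total weight `f(G)` of a fractional matching. -/
def SimpleGraph.fracWeight {V : Type*} [Fintype V] (G : SimpleGraph V)
    (f : Sym2 V → ℝ) : ℝ :=
  ∑ e ∈ G.edgeFinset, f e

/-- The weight `f(v)` of a vertex: the sum over edges incident to `v`. -/
def SimpleGraph.vertexWeight {V : Type*} [Fintype V] (G : SimpleGraph V)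
    (f : Sym2 V → ℝ) (v : V) : ℝ :=
  ∑ e ∈ G.incidenceFinset v, f e

/-- The fractional matching number `α'(G)`. -/
def SimpleGraph.fracNu {V : Type*} [Fintype V] (G : SimpleGraph V) : ℝ :=
  sSup {x : ℝ | ∃ f, G.IsFracMatching f ∧ G.fracWeight f = x}

end

section Aux
variable {V : Type*} [Fintype V] {G : SimpleGraph V}

lemma vw_eq (f : Sym2 V → ℝ) (v : V) :
    ∑ e ∈ G.incidenceFinset v, f e = ∑ e ∈ G.edgeFinset, if v ∈ e then f e else 0 := by
  rw [G.incidenceFinset_eq_filter v, Finset.sum_filter]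

lemma sum_vw (f : Sym2 V → ℝ) (A : Finset V) :
    ∑ v ∈ A, ∑ e ∈ G.incidenceFinset v, f e =
      ∑ e ∈ G.edgeFinset, f e * ((A.filter (fun v => v ∈ e)).card : ℝ) := by
  simp only [vw_eq]
  rw [Finset.sum_comm]
  refine Finset.sum_congr rfl fun e _ => ?_
  rw [← Finset.sum_filter, Finset.sum_const, nsmul_eq_mul, mul_comm]

end Aux
section Aux2
variable {V : Type*} [Fintype V] {G : SimpleGraph V}

lemma ub_within (f : Sym2 V → ℝ) (hf : G.IsFracMatching f) (A : Finset V)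
    (hA : ∀ x y, G.Adj x y → x ∈ A ∧ y ∈ A) : G.fracWeight f ≤ (A.card : ℝ) / 2 := by
  have key : ∀ e ∈ G.edgeFinset, ((A.filter (fun v => v ∈ e)).card : ℝ) = 2 := by
    intro e he
    induction e with
    | h x y =>
      rw [SimpleGraph.mem_edgeFinset, SimpleGraph.mem_edgeSet] at he
      have hxy : x ≠ y := he.ne
      have : A.filter (fun v => v ∈ s(x, y)) = {x, y} := by
        ext v
        simp only [Finset.mem_filter, Sym2.mem_iff, Finset.mem_insert, Finset.mem_singleton]
        constructor
        · rintro ⟨-, h⟩; exact h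
        · intro h
          refine ⟨?_, h⟩
          rcases h with h | h <;> rw [h]
          · exact (hA x y he).1
          · exact (hA x y he).2
      rw [this, Finset.card_pair hxy]; norm_num
  have h1 : ∑ v ∈ A, ∑ e ∈ G.incidenceFinset v, f e = 2 * G.fracWeight f := by
    rw [sum_vw, SimpleGraph.fracWeight, Finset.mul_sum]
    exact Finset.sum_congr rfl fun e he => by rw [key e he, mul_comm]
  have h2 : ∑ v ∈ A, ∑ e ∈ G.incidenceFinset v, f e ≤ (A.card : ℝ) := by
    calc ∑ v ∈ A, ∑ e ∈ G.incidenceFinset v, f e ≤ ∑ _v ∈ A, (1:ℝ) :=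
          Finset.sum_le_sum fun v _ => hf.2.2 v
      _ = A.card := by simp
  linarith
  
lemma ub_meet (f : Sym2 V → ℝ) (hf : G.IsFracMatching f) (A : Finset V)
    (hA : ∀ x y, G.Adj x y → x ∈ A ∨ y ∈ A) : G.fracWeight f ≤ (A.card : ℝ) := by
  have key : ∀ e ∈ G.edgeFinset, (1:ℝ) ≤ ((A.filter (fun v => v ∈ e)).card : ℝ) := by
    intro e he
    induction e with
    | h x y =>
      rw [SimpleGraph.mem_edgeFinset, SimpleGraph.mem_edgeSet] at he
      have : (A.filter (fun v => v ∈ s(x, y))).Nonempty := by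
        rcases hA x y he with h | h
        · exact ⟨x, Finset.mem_filter.2 ⟨h, by simp⟩⟩
        · exact ⟨y, Finset.mem_filter.2 ⟨h, by simp⟩⟩
      have := Finset.card_pos.2 this
      exact_mod_cast this
  calc G.fracWeight f = ∑ e ∈ G.edgeFinset, f e := rfl
    _ ≤ ∑ e ∈ G.edgeFinset, f e * ((A.filter (fun v => v ∈ e)).card : ℝ) := by
        refine Finset.sum_le_sum fun e he => ?_
        have h0 := (hf.1 e).1
        nlinarith [key e he]
    _ = ∑ v ∈ A, ∑ e ∈ G.incidenceFinset v, f e := (sum_vw f A).symm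
    _ ≤ ∑ _v ∈ A, (1:ℝ) := Finset.sum_le_sum fun v _ => hf.2.2 v
    _ = A.card := by simp

end Aux2
section Aux3
variable {V : Type*} [Fintype V] {G : SimpleGraph V}

lemma fm_of (S : Finset (Sym2 V)) (w : Sym2 V → ℝ)
    (hS : ∀ e ∈ S, e ∈ G.edgeSet) (hw0 : ∀ e, 0 ≤ w e) (hw1 : ∀ e, w e ≤ 1)
    (hv : ∀ v : V, ∑ e ∈ S, (if v ∈ e then w e else 0) ≤ 1) :
    ∃ f, G.IsFracMatching f ∧ G.fracWeight f = ∑ e ∈ S, w e := by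
  classical
  refine ⟨fun e => if e ∈ S then w e else 0, ⟨?_, ?_, ?_⟩, ?_⟩
  · intro e; by_cases h : e ∈ S <;> simp [h, hw0 e, hw1 e]
  · intro e he
    have : e ∉ S := fun h => he (hS e h)
    simp [this]
  · intro v
    rw [vw_eq]
    have hsub : S ⊆ G.edgeFinset := fun e he => SimpleGraph.mem_edgeFinset.2 (hS e he)
    have := Finset.sum_subset hsub
      (f := fun e => if v ∈ e then (if e ∈ S then w e else 0) else 0)
      (fun e _ he' => by simp [he'])
    rw [← this]
    calc ∑ e ∈ S, (if v ∈ e then (if e ∈ S then w e else 0) else 0)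
        = ∑ e ∈ S, (if v ∈ e then w e else 0) :=
          Finset.sum_congr rfl fun e he => by simp [he]
      _ ≤ 1 := hv v
  · rw [SimpleGraph.fracWeight]
    have hsub : S ⊆ G.edgeFinset := fun e he => SimpleGraph.mem_edgeFinset.2 (hS e he)
    rw [← Finset.sum_subset hsub (fun e _ he' => by simp [he'])]
    exact Finset.sum_congr rfl fun e he => by simp [he]

end Aux3
section Aux4
variable {V : Type*} [Fintype V] {G : SimpleGraph V}

lemma fm_two {a b c d : V} (hab : G.Adj a b) (hcd : G.Adj c d)
    (hac : a ≠ c) (had : a ≠ d) (hbc : b ≠ c) (hbd : b ≠ d) :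
    ∃ f, G.IsFracMatching f ∧ G.fracWeight f = 2 := by
  classical
  have hne : s(a,b) ≠ s(c,d) := by simp [Sym2.eq_iff]; tauto
  obtain ⟨f, hf, hw⟩ := fm_of (G := G) {s(a,b), s(c,d)} (fun _ => 1)
    (by intro e he; simp at he; rcases he with rfl | rfl <;> simpa)
    (fun _ => zero_le_one) (fun _ => le_refl 1)
    (by
      intro v
      rw [Finset.sum_insert (by simpa using hne), Finset.sum_singleton]
      have h12 : ¬(v ∈ s(a,b) ∧ v ∈ s(c,d)) := by
        simp only [Sym2.mem_iff]; rintro ⟨h1 | h1, h2 | h2⟩ <;> subst h1 <;> simp_all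
      split_ifs <;> norm_num <;> tauto)
  refine ⟨f, hf, ?_⟩
  rw [hw, Finset.sum_insert (by simpa using hne), Finset.sum_singleton]
  norm_num

end Aux4
section Aux5
variable {V : Type*} [Fintype V] {G : SimpleGraph V}

lemma fm_three {a b c d p q : V} (hab : G.Adj a b) (hcd : G.Adj c d) (hpq : G.Adj p q)
    (hac : a ≠ c) (had : a ≠ d) (hbc : b ≠ c) (hbd : b ≠ d)
    (hap : a ≠ p) (haq : a ≠ q) (hbp : b ≠ p) (hbq : b ≠ q)
    (hcp : c ≠ p) (hcq : c ≠ q) (hdp : d ≠ p) (hdq : d ≠ q) :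
    ∃ f, G.IsFracMatching f ∧ G.fracWeight f = 3 := by
  classical
  have h1 : s(a,b) ∉ ({s(c,d), s(p,q)} : Finset (Sym2 V)) := by
    simp [Sym2.eq_iff]; tauto
  have h2 : s(c,d) ∉ ({s(p,q)} : Finset (Sym2 V)) := by
    simp [Sym2.eq_iff]; tauto
  obtain ⟨f, hf, hw⟩ := fm_of (G := G) {s(a,b), s(c,d), s(p,q)} (fun _ => 1)
    (by intro e he; simp at he; rcases he with rfl | rfl | rfl <;> simpa)
    (fun _ => zero_le_one) (fun _ => le_refl 1)
    (by
      intro v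
      rw [Finset.sum_insert h1, Finset.sum_insert h2, Finset.sum_singleton]
      have h12 : ¬(v ∈ s(a,b) ∧ v ∈ s(c,d)) := by
        simp only [Sym2.mem_iff]; rintro ⟨h1 | h1, h2 | h2⟩ <;> subst h1 <;> simp_all
      have h13 : ¬(v ∈ s(a,b) ∧ v ∈ s(p,q)) := by
        simp only [Sym2.mem_iff]; rintro ⟨h1 | h1, h2 | h2⟩ <;> subst h1 <;> simp_all
      have h23 : ¬(v ∈ s(c,d) ∧ v ∈ s(p,q)) := by
        simp only [Sym2.mem_iff]; rintro ⟨h1 | h1, h2 | h2⟩ <;> subst h1 <;> simp_all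
      split_ifs <;> norm_num <;> tauto)
  refine ⟨f, hf, ?_⟩
  rw [hw, Finset.sum_insert h1, Finset.sum_insert h2, Finset.sum_singleton]
  norm_num

set_option maxHeartbeats 1000000 in
lemma fm_triangle_edge {a b c x y : V} (hab : G.Adj a b) (hbc : G.Adj b c) (hac : G.Adj a c)
    (hxy : G.Adj x y)
    (hax : a ≠ x) (hay : a ≠ y) (hbx : b ≠ x) (hby : b ≠ y) (hcx : c ≠ x) (hcy : c ≠ y) :
    ∃ f, G.IsFracMatching f ∧ G.fracWeight f = 5/2 := by
  classical
  have hab' := hab.ne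
  have hbc' := hbc.ne
  have hac' := hac.ne
  have h1 : s(x,y) ∉ ({s(a,b), s(b,c), s(a,c)} : Finset (Sym2 V)) := by
    simp [Sym2.eq_iff]; tauto
  have h2 : s(a,b) ∉ ({s(b,c), s(a,c)} : Finset (Sym2 V)) := by
    simp [Sym2.eq_iff]; tauto
  have h3 : s(b,c) ∉ ({s(a,c)} : Finset (Sym2 V)) := by
    simp [Sym2.eq_iff]; tauto
  set w : Sym2 V → ℝ := fun e => if e = s(x,y) then 1 else 1/2 with hwdef
  have hw1 : w s(x,y) = 1 := by simp [hwdef]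
  have hw2 : w s(a,b) = 1/2 := by
    simp only [hwdef]; rw [if_neg]; simp [Sym2.eq_iff]; tauto
  have hw3 : w s(b,c) = 1/2 := by
    simp only [hwdef]; rw [if_neg]; simp [Sym2.eq_iff]; tauto
  have hw4 : w s(a,c) = 1/2 := by
    simp only [hwdef]; rw [if_neg]; simp [Sym2.eq_iff]; tauto
  obtain ⟨f, hf, hw⟩ := fm_of (G := G) {s(x,y), s(a,b), s(b,c), s(a,c)} w
    (by intro e he; simp at he; rcases he with rfl | rfl | rfl | rfl <;> simpa)
    (by intro e; simp only [hwdef]; split_ifs <;> norm_num)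
    (by intro e; simp only [hwdef]; split_ifs <;> norm_num)
    (by
      intro v
      rw [Finset.sum_insert h1, Finset.sum_insert h2, Finset.sum_insert h3,
        Finset.sum_singleton, hw1, hw2, hw3, hw4]
      have h12 : ¬(v ∈ s(x,y) ∧ v ∈ s(a,b)) := by
        simp only [Sym2.mem_iff]; rintro ⟨h1 | h1, h2 | h2⟩ <;> subst h1 <;> simp_all
      have h13 : ¬(v ∈ s(x,y) ∧ v ∈ s(b,c)) := by
        simp only [Sym2.mem_iff]; rintro ⟨h1 | h1, h2 | h2⟩ <;> subst h1 <;> simp_all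
      have h14 : ¬(v ∈ s(x,y) ∧ v ∈ s(a,c)) := by
        simp only [Sym2.mem_iff]; rintro ⟨h1 | h1, h2 | h2⟩ <;> subst h1 <;> simp_all
      have h234 : ¬(v ∈ s(a,b) ∧ v ∈ s(b,c) ∧ v ∈ s(a,c)) := by
        simp only [Sym2.mem_iff]; rintro ⟨h1 | h1, h2 | h2, h3 | h3⟩ <;> subst h1 <;> simp_all
      split_ifs <;> norm_num <;> tauto)
  refine ⟨f, hf, ?_⟩
  rw [hw, Finset.sum_insert h1, Finset.sum_insert h2, Finset.sum_insert h3,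
    Finset.sum_singleton, hw1, hw2, hw3, hw4]
  norm_num

end Aux5
section Aux6
variable {V : Type*} [Fintype V] {G : SimpleGraph V}

set_option maxHeartbeats 2000000 in
lemma fm_c5 {v0 v1 v2 v3 v4 : V}
    (h01 : G.Adj v0 v1) (h12 : G.Adj v1 v2) (h23 : G.Adj v2 v3) (h34 : G.Adj v3 v4)
    (h40 : G.Adj v4 v0)
    (n02 : v0 ≠ v2) (n03 : v0 ≠ v3) (n13 : v1 ≠ v3) (n14 : v1 ≠ v4) (n24 : v2 ≠ v4) :
    ∃ f, G.IsFracMatching f ∧ G.fracWeight f = 5/2 := by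
  classical
  have n01 := h01.ne
  have n12 := h12.ne
  have n23 := h23.ne
  have n34 := h34.ne
  have n40 := h40.ne
  have h1 : s(v0,v1) ∉ ({s(v1,v2), s(v2,v3), s(v3,v4), s(v4,v0)} : Finset (Sym2 V)) := by
    simp [Sym2.eq_iff]; tauto
  have h2 : s(v1,v2) ∉ ({s(v2,v3), s(v3,v4), s(v4,v0)} : Finset (Sym2 V)) := by
    simp [Sym2.eq_iff]; tauto
  have h3 : s(v2,v3) ∉ ({s(v3,v4), s(v4,v0)} : Finset (Sym2 V)) := by
    simp [Sym2.eq_iff]; tauto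
  have h4 : s(v3,v4) ∉ ({s(v4,v0)} : Finset (Sym2 V)) := by
    simp [Sym2.eq_iff]; tauto
  obtain ⟨f, hf, hw⟩ := fm_of (G := G) {s(v0,v1), s(v1,v2), s(v2,v3), s(v3,v4), s(v4,v0)}
    (fun _ => 1/2)
    (by intro e he; simp at he; rcases he with rfl | rfl | rfl | rfl | rfl <;> simpa)
    (by intro e; norm_num) (by intro e; norm_num)
    (by
      intro v
      rw [Finset.sum_insert h1, Finset.sum_insert h2, Finset.sum_insert h3,
        Finset.sum_insert h4, Finset.sum_singleton]
      have k13 : ¬(v ∈ s(v0,v1) ∧ v ∈ s(v2,v3)) := by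
        simp only [Sym2.mem_iff]; rintro ⟨h1 | h1, h2 | h2⟩ <;> subst h1 <;> simp_all
      have k14 : ¬(v ∈ s(v0,v1) ∧ v ∈ s(v3,v4)) := by
        simp only [Sym2.mem_iff]; rintro ⟨h1 | h1, h2 | h2⟩ <;> subst h1 <;> simp_all
      have k24 : ¬(v ∈ s(v1,v2) ∧ v ∈ s(v3,v4)) := by
        simp only [Sym2.mem_iff]; rintro ⟨h1 | h1, h2 | h2⟩ <;> subst h1 <;> simp_all
      have k25 : ¬(v ∈ s(v1,v2) ∧ v ∈ s(v4,v0)) := by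
        simp only [Sym2.mem_iff]; rintro ⟨h1 | h1, h2 | h2⟩ <;> subst h1 <;> simp_all
      have k35 : ¬(v ∈ s(v2,v3) ∧ v ∈ s(v4,v0)) := by
        simp only [Sym2.mem_iff]; rintro ⟨h1 | h1, h2 | h2⟩ <;> subst h1 <;> simp_all
      have k125 : ¬(v ∈ s(v0,v1) ∧ v ∈ s(v1,v2) ∧ v ∈ s(v4,v0)) := by
        simp only [Sym2.mem_iff]; rintro ⟨h1 | h1, _, _⟩ <;> subst h1 <;> simp_all
      split_ifs <;> norm_num <;> tauto)
  refine ⟨f, hf, ?_⟩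
  rw [hw, Finset.sum_insert h1, Finset.sum_insert h2, Finset.sum_insert h3,
    Finset.sum_insert h4, Finset.sum_singleton]
  norm_num

end Aux6
section Aux7
variable {V : Type*} [Fintype V] {G : SimpleGraph V}

lemma zero_mem_mset : (0:ℝ) ∈ {x : ℝ | ∃ f, G.IsFracMatching f ∧ G.fracWeight f = x} := by
  refine ⟨fun _ => 0, ⟨fun e => by norm_num, fun _ _ => rfl, fun v => by simp⟩, ?_⟩
  simp [SimpleGraph.fracWeight]

lemma bdd_mset : BddAbove {x : ℝ | ∃ f, G.IsFracMatching f ∧ G.fracWeight f = x} := by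
  refine ⟨(G.edgeFinset.card : ℝ), ?_⟩
  rintro x ⟨f, hf, rfl⟩
  calc G.fracWeight f = ∑ e ∈ G.edgeFinset, f e := rfl
    _ ≤ ∑ _e ∈ G.edgeFinset, (1:ℝ) := Finset.sum_le_sum fun e _ => (hf.1 e).2
    _ = G.edgeFinset.card := by simp

lemma le_fracNu {f : Sym2 V → ℝ} (hf : G.IsFracMatching f) : G.fracWeight f ≤ G.fracNu :=
  le_csSup bdd_mset ⟨f, hf, rfl⟩

lemma fracNu_le {c : ℝ} (h : ∀ f, G.IsFracMatching f → G.fracWeight f ≤ c) : G.fracNu ≤ c :=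
  csSup_le ⟨0, zero_mem_mset⟩ (by rintro x ⟨f, hf, rfl⟩; exact h f hf)

end Aux7

section Comb
variable {V : Type*} [Fintype V] {G : SimpleGraph V}

lemma comb {a b c d x : V} (hab : G.Adj a b) (hcd : G.Adj c d) (hxa : G.Adj x a)
    (hac : a ≠ c) (had : a ≠ d) (hbc : b ≠ c) (hbd : b ≠ d)
    (hxb : x ≠ b) (hxc : x ≠ c) (hxd : x ≠ d)
    (h3 : ∀ p q r s t u : V, G.Adj p q → G.Adj r s → G.Adj t u →
      p ≠ r → p ≠ s → q ≠ r → q ≠ s → p ≠ t → p ≠ u → q ≠ t → q ≠ u →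
      r ≠ t → r ≠ u → s ≠ t → s ≠ u → False)
    (hT : ∀ p q r s t : V, G.Adj p q → G.Adj q r → G.Adj p r → G.Adj s t →
      p ≠ s → p ≠ t → q ≠ s → q ≠ t → r ≠ s → r ≠ t → False)
    (hC : ∀ p q r s t : V, G.Adj p q → G.Adj q r → G.Adj r s → G.Adj s t → G.Adj t p →
      p ≠ r → p ≠ s → q ≠ s → q ≠ t → r ≠ t → False)
    (hcovac : ¬ ∀ y z, G.Adj y z → y = a ∨ y = c ∨ z = a ∨ z = c)
    (hcovad : ¬ ∀ y z, G.Adj y z → y = a ∨ y = d ∨ z = a ∨ z = d) : False := by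
  have hab' : a ≠ b := hab.ne
  have hcd' : c ≠ d := hcd.ne
  have hxa' : x ≠ a := hxa.ne
  -- F0: every edge meets {a,b,c,d}
  have F0 : ∀ y z, G.Adj y z → (y = a ∨ y = b ∨ y = c ∨ y = d) ∨
      (z = a ∨ z = b ∨ z = c ∨ z = d) := by
    intro y z hyz
    by_contra h
    push_neg at h
    obtain ⟨⟨hy1, hy2, hy3, hy4⟩, hz1, hz2, hz3, hz4⟩ := h
    exact h3 a b c d y z hab hcd hyz hac had hbc hbd
      (Ne.symm hy1) (Ne.symm hz1) (Ne.symm hy2) (Ne.symm hz2)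
      (Ne.symm hy3) (Ne.symm hz3) (Ne.symm hy4) (Ne.symm hz4)
  -- F1: no vertex outside {a,c,d} adjacent to b
  have F1 : ∀ y, G.Adj y b → y = a ∨ y = c ∨ y = d := by
    intro y hyb
    by_contra h
    push_neg at h
    obtain ⟨hya, hyc, hyd⟩ := h
    have hyb' : y ≠ b := hyb.ne
    by_cases hyx : y = x
    · subst hyx
      exact hT y a b c d hxa hab hyb hcd hxc hxd hac had hbc hbd
    · exact h3 x a y b c d hxa hyb hcd (Ne.symm hyx) hxb (Ne.symm hya) hab' hxc hxd hac had hyc hyd hbc hbd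
  -- P: either bd is an edge or d has an outside neighbor
  have P : G.Adj b d ∨ ∃ w, w ≠ a ∧ w ≠ b ∧ w ≠ c ∧ w ≠ d ∧ G.Adj w d := by
    push_neg at hcovac
    obtain ⟨y, z, hyz, hya, hyc, hza, hzc⟩ := hcovac
    rcases F0 y z hyz with (h | h | h | h) | (h | h | h | h)
    · exact absurd h hya
    · subst h
      by_cases hzd : z = d
      · subst hzd; exact Or.inl hyz
      · rcases F1 z hyz.symm with h' | h' | h' <;> [exact absurd h' hza;
          exact absurd h' hzc; exact absurd h' hzd]
    · exact absurd h hyc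
    · subst h
      by_cases hzb : z = b
      · subst hzb; exact Or.inl hyz.symm
      · exact Or.inr ⟨z, hza, hzb, hzc, Ne.symm hyz.ne, hyz.symm⟩
    · exact absurd h hza
    · subst h
      by_cases hyd : y = d
      · subst hyd; exact Or.inl hyz.symm
      · rcases F1 y hyz with h' | h' | h' <;> [exact absurd h' hya;
          exact absurd h' hyc; exact absurd h' hyd]
    · exact absurd h hzc
    · subst h
      by_cases hyb : y = b
      · subst hyb; exact Or.inl hyz
      · exact Or.inr ⟨y, hya, hyb, hyc, hyz.ne, hyz⟩
  -- Q: either bc is an edge or c has an outside neighbor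
  have Q : G.Adj b c ∨ ∃ w, w ≠ a ∧ w ≠ b ∧ w ≠ c ∧ w ≠ d ∧ G.Adj w c := by
    push_neg at hcovad
    obtain ⟨y, z, hyz, hya, hyd, hza, hzd⟩ := hcovad
    rcases F0 y z hyz with (h | h | h | h) | (h | h | h | h)
    · exact absurd h hya
    · subst h
      by_cases hzc : z = c
      · subst hzc; exact Or.inl hyz
      · rcases F1 z hyz.symm with h' | h' | h' <;> [exact absurd h' hza;
          exact absurd h' hzc; exact absurd h' hzd]
    · subst h
      by_cases hzb : z = b
      · subst hzb; exact Or.inl hyz.symm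
      · exact Or.inr ⟨z, hza, hzb, Ne.symm hyz.ne, hzd, hyz.symm⟩
    · exact absurd h hyd
    · exact absurd h hza
    · subst h
      by_cases hyc : y = c
      · subst hyc; exact Or.inl hyz.symm
      · rcases F1 y hyz with h' | h' | h' <;> [exact absurd h' hya;
          exact absurd h' hyc; exact absurd h' hyd]
    · subst h
      by_cases hyb : y = b
      · subst hyb; exact Or.inl hyz
      · exact Or.inr ⟨y, hya, hyb, hyz.ne, hyd, hyz⟩
    · exact absurd h hzd
  rcases P with hbd2 | ⟨w, hwa, hwb, hwc, hwd, hwdadj⟩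
  · rcases Q with hbc2 | ⟨w, hwa, hwb, hwc, hwd, hwcadj⟩
    · -- triangle b c d plus edge x a
      exact hT b c d x a hbc2 hcd hbd2 hxa (Ne.symm hxb) hab'.symm (Ne.symm hxc) hac.symm
        (Ne.symm hxd) had.symm
    · by_cases hwx : w = x
      · have hxcadj : G.Adj x c := hwx ▸ hwcadj
        exact hC x a b d c hxa hab hbd2 hcd.symm hxcadj.symm hxb hxd had hac hbc
      · -- 3-matching x a, w c, b d
        exact h3 x a w c b d hxa hwcadj hbd2 (Ne.symm hwx) hxc (Ne.symm hwa) hac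
          hxb hxd hab' had hwb hwd (Ne.symm hbc) hcd'
  · rcases Q with hbc2 | ⟨w', hw'a, hw'b, hw'c, hw'd, hw'cadj⟩
    · by_cases hwx : w = x
      · have hxdadj : G.Adj x d := hwx ▸ hwdadj
        exact hC x a b c d hxa hab hbc2 hcd hxdadj.symm hxb hxc hac had hbd
      · -- 3-matching x a, w d, b c
        exact h3 x a w d b c hxa hwdadj hbc2 (Ne.symm hwx) hxd (Ne.symm hwa) had
          hxb hxc hab' hac hwb hwc (Ne.symm hbd) hcd'.symm
    · by_cases hww : w = w'
      · subst hww
        -- triangle w c d plus edge a b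
        exact hT w c d a b hw'cadj hcd hwdadj hab hwa hwb hac.symm hbc.symm had.symm hbd.symm
      · -- 3-matching a b, w' c, w d
        exact h3 a b w' c w d hab hw'cadj hwdadj (Ne.symm hw'a) hac (Ne.symm hw'b) hbc
          (Ne.symm hwa) had (Ne.symm hwb) hbd (Ne.symm hww) hw'd hwc.symm hcd'


end Comb
set_option maxHeartbeats 800000 in
theorem stmt_7 {V : Type*} [Fintype V] (G : SimpleGraph V) :
    G.fracNu = 2 ↔
      ((∃ A : Finset V, A.card = 4 ∧ (∀ x y : V, G.Adj x y → x ∈ A ∧ y ∈ A) ∧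
        ∃ a b c d : V, a ≠ b ∧ a ≠ c ∧ a ≠ d ∧ b ≠ c ∧ b ≠ d ∧ c ≠ d ∧
          G.Adj a b ∧ G.Adj c d) ∨
      (∃ u v : V, u ≠ v ∧ (∀ x y : V, G.Adj x y → x = u ∨ x = v ∨ y = u ∨ y = v) ∧
        ∃ a b c d : V, a ≠ b ∧ a ≠ c ∧ a ≠ d ∧ b ≠ c ∧ b ≠ d ∧ c ≠ d ∧
          G.Adj a b ∧ G.Adj c d)) := by
  constructor
  · intro h
    -- contradiction-producing hypotheses
    have h3 : ∀ p q r s t u : V, G.Adj p q → G.Adj r s → G.Adj t u →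
        p ≠ r → p ≠ s → q ≠ r → q ≠ s → p ≠ t → p ≠ u → q ≠ t → q ≠ u →
        r ≠ t → r ≠ u → s ≠ t → s ≠ u → False := by
      intro p q r s t u e1 e2 e3 d1 d2 d3 d4 d5 d6 d7 d8 d9 d10 d11 d12
      obtain ⟨f, hf, hw⟩ := fm_three e1 e2 e3 d1 d2 d3 d4 d5 d6 d7 d8 d9 d10 d11 d12
      have := le_fracNu hf
      rw [hw, h] at this
      norm_num at this
    have hT : ∀ p q r s t : V, G.Adj p q → G.Adj q r → G.Adj p r → G.Adj s t →
        p ≠ s → p ≠ t → q ≠ s → q ≠ t → r ≠ s → r ≠ t → False := by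
      intro p q r s t e1 e2 e3 e4 d1 d2 d3 d4 d5 d6
      obtain ⟨f, hf, hw⟩ := fm_triangle_edge e1 e2 e3 e4 d1 d2 d3 d4 d5 d6
      have := le_fracNu hf
      rw [hw, h] at this
      norm_num at this
    have hC : ∀ p q r s t : V, G.Adj p q → G.Adj q r → G.Adj r s → G.Adj s t → G.Adj t p →
        p ≠ r → p ≠ s → q ≠ s → q ≠ t → r ≠ t → False := by
      intro p q r s t e1 e2 e3 e4 e5 d1 d2 d3 d4 d5
      obtain ⟨f, hf, hw⟩ := fm_c5 e1 e2 e3 e4 e5 d1 d2 d3 d4 d5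
      have := le_fracNu hf
      rw [hw, h] at this
      norm_num at this
    -- Step 1: there are two disjoint edges
    have htwo : ∃ a b c d : V, a ≠ b ∧ a ≠ c ∧ a ≠ d ∧ b ≠ c ∧ b ≠ d ∧ c ≠ d ∧
        G.Adj a b ∧ G.Adj c d := by
      by_contra hno
      have hno2 : ∀ a b c d : V, G.Adj a b → G.Adj c d →
          a = c ∨ a = d ∨ b = c ∨ b = d := by
        intro a b c d hab hcd
        by_contra hcon
        push_neg at hcon
        exact hno ⟨a, b, c, d, hab.ne, hcon.1, hcon.2.1, hcon.2.2.1, hcon.2.2.2, hcd.ne,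
          hab, hcd⟩
      by_cases hE : ∃ a b, G.Adj a b
      · obtain ⟨a, b, hab⟩ := hE
        suffices hle : G.fracNu ≤ 3/2 by rw [h] at hle; norm_num at hle
        by_cases hstara : ∀ y z, G.Adj y z → y = a ∨ z = a
        · have hle1 : G.fracNu ≤ (({a} : Finset V).card : ℝ) :=
            fracNu_le fun f hf => ub_meet f hf {a}
              (fun y z hyz => by simpa using hstara y z hyz)
          simp at hle1
          linarith
        · push_neg at hstara
          obtain ⟨p, q, hpq, hpa, hqa⟩ := hstara
          obtain ⟨c, hbc, hca⟩ : ∃ c, G.Adj b c ∧ c ≠ a := by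
            rcases hno2 p q a b hpq hab with h' | h' | h' | h'
            · exact absurd h' hpa
            · exact ⟨q, h' ▸ hpq, hqa⟩
            · exact absurd h' hqa
            · exact ⟨p, (h' ▸ hpq).symm, hpa⟩
          have hcb : c ≠ b := hbc.ne'
          have hab' : a ≠ b := hab.ne
          by_cases hstarb : ∀ y z, G.Adj y z → y = b ∨ z = b
          · have hle1 : G.fracNu ≤ (({b} : Finset V).card : ℝ) :=
              fracNu_le fun f hf => ub_meet f hf {b}
                (fun y z hyz => by simpa using hstarb y z hyz)
            simp at hle1
            linarith
          · push_neg at hstarb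
            obtain ⟨r, s, hrs, hrb, hsb⟩ := hstarb
            have hac2 : G.Adj a c := by
              have er : r = a ∨ s = a := by
                rcases hno2 r s a b hrs hab with h' | h' | h' | h'
                · exact Or.inl h'
                · exact absurd h' hrb
                · exact Or.inr h'
                · exact absurd h' hsb
              have ec : r = c ∨ s = c := by
                rcases hno2 r s b c hrs hbc with h' | h' | h' | h'
                · exact absurd h' hrb
                · exact Or.inl h'
                · exact absurd h' hsb
                · exact Or.inr h'
              rcases er with h1 | h1 <;> rcases ec with h2 | h2
              · exact absurd (h1.symm.trans h2) (Ne.symm hca)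
              · rw [← h1, ← h2]; exact hrs
              · rw [← h1, ← h2]; exact hrs.symm
              · exact absurd (h1.symm.trans h2) (Ne.symm hca)
            have one : ∀ y z, G.Adj y z → y = a ∨ y = b ∨ y = c := by
              intro y z hyz
              by_contra hy
              push_neg at hy
              obtain ⟨hy1, hy2, hy3⟩ := hy
              have e1 := hno2 y z a b hyz hab
              have e2 := hno2 y z b c hyz hbc
              have e3 := hno2 y z a c hyz hac2
              rcases e1 with h' | h' | h' | h'
              · exact absurd h' hy1
              · exact absurd h' hy2
              · rcases e2 with h'' | h'' | h'' | h''
                · exact absurd h'' hy2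
                · exact absurd h'' hy3
                · exact absurd (h'.symm.trans h'') hab'
                · exact absurd (h'.symm.trans h'') (Ne.symm hca)
              · rcases e3 with h'' | h'' | h'' | h''
                · exact absurd h'' hy1
                · exact absurd h'' hy3
                · exact absurd (h'.symm.trans h'') (Ne.symm hab')
                · exact absurd (h'.symm.trans h'') (Ne.symm hcb)
            have key : ∀ y z, G.Adj y z →
                y ∈ ({a, b, c} : Finset V) ∧ z ∈ ({a, b, c} : Finset V) := by
              intro y z hyz
              simp only [Finset.mem_insert, Finset.mem_singleton]
              exact ⟨one y z hyz, one z y hyz.symm⟩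
            have hcard : ({a, b, c} : Finset V).card = 3 := by
              rw [Finset.card_insert_of_notMem (by simp [hab', Ne.symm hca]),
                Finset.card_pair (Ne.symm hcb)]
            have hle1 : G.fracNu ≤ (({a, b, c} : Finset V).card : ℝ) / 2 :=
              fracNu_le fun f hf => ub_within f hf _ key
            rw [hcard] at hle1
            norm_num at hle1
            linarith
      · push_neg at hE
        have hempty : G.edgeFinset = ∅ := by
          ext e
          simp only [SimpleGraph.mem_edgeFinset, Finset.notMem_empty, iff_false]
          induction e with
          | h y z => exact fun he => hE y z (G.mem_edgeSet.1 he)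
        have hle1 : G.fracNu ≤ 0 :=
          fracNu_le fun f hf => by
            rw [SimpleGraph.fracWeight, hempty]; simp
        rw [h] at hle1
        norm_num at hle1
    obtain ⟨a, b, c, d, hab', hac, had, hbc, hbd, hcd', hab, hcd⟩ := htwo
    by_contra hcon
    rw [not_or] at hcon
    obtain ⟨h1, h2⟩ := hcon
    have hcard : ({a, b, c, d} : Finset V).card = 4 := by
      rw [Finset.card_insert_of_notMem (by simp [hab', hac, had]),
        Finset.card_insert_of_notMem (by simp [hbc, hbd]),
        Finset.card_pair hcd']
    have hcov : ∀ u v : V, u ≠ v →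
        ¬(∀ x y : V, G.Adj x y → x = u ∨ x = v ∨ y = u ∨ y = v) :=
      fun u v huv hall => h2 ⟨u, v, huv, hall, a, b, c, d, hab', hac, had, hbc, hbd, hcd',
        hab, hcd⟩
    have hne : ¬ ∀ x y : V, G.Adj x y →
        x ∈ ({a, b, c, d} : Finset V) ∧ y ∈ ({a, b, c, d} : Finset V) :=
      fun hall => h1 ⟨{a, b, c, d}, hcard, hall, a, b, c, d, hab', hac, had, hbc, hbd, hcd',
        hab, hcd⟩
    push_neg at hne
    obtain ⟨y, z, hyz, hmem⟩ := hne
    obtain ⟨x, t, hxt, hxA⟩ : ∃ x t, G.Adj x t ∧ x ∉ ({a, b, c, d} : Finset V) := by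
      by_cases hy : y ∈ ({a, b, c, d} : Finset V)
      · exact ⟨z, y, hyz.symm, hmem hy⟩
      · exact ⟨y, z, hyz, hy⟩
    simp only [Finset.mem_insert, Finset.mem_singleton, not_or] at hxA
    obtain ⟨hxa, hxb, hxc, hxd⟩ := hxA
    by_cases htA : t ∈ ({a, b, c, d} : Finset V)
    · simp only [Finset.mem_insert, Finset.mem_singleton] at htA
      rcases htA with rfl | rfl | rfl | rfl
      · exact comb hab hcd hxt hac had hbc hbd hxb hxc hxd h3 hT hC
          (hcov t c hac) (hcov t d had)
      · exact comb hab.symm hcd hxt hbc hbd hac had hxa hxc hxd h3 hT hC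
          (hcov t c hbc) (hcov t d hbd)
      · exact comb hcd hab hxt (Ne.symm hac) (Ne.symm hbc) (Ne.symm had) (Ne.symm hbd)
          hxd hxa hxb h3 hT hC (hcov t a (Ne.symm hac)) (hcov t b (Ne.symm hbc))
      · exact comb hcd.symm hab hxt (Ne.symm had) (Ne.symm hbd) (Ne.symm hac) (Ne.symm hbc)
          hxc hxa hxb h3 hT hC (hcov t a (Ne.symm had)) (hcov t b (Ne.symm hbd))
    · simp only [Finset.mem_insert, Finset.mem_singleton, not_or] at htA
      obtain ⟨hta, htb, htc, htd⟩ := htA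
      exact h3 a b c d x t hab hcd hxt hac had hbc hbd (Ne.symm hxa) (Ne.symm hta)
        (Ne.symm hxb) (Ne.symm htb) (Ne.symm hxc) (Ne.symm htc) (Ne.symm hxd) (Ne.symm htd)
  · intro hcond
    rcases hcond with ⟨A, hA4, hAin, a, b, c, d, hab', hac, had, hbc, hbd, hcd', hab, hcd⟩ |
      ⟨u, v, huv, hcovuv, a, b, c, d, hab', hac, had, hbc, hbd, hcd', hab, hcd⟩
    · have hle : G.fracNu ≤ 2 := by
        have := fracNu_le (G := G) fun f hf => ub_within f hf A hAin
        rw [hA4] at this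
        norm_num at this
        exact this
      obtain ⟨f, hf, hw⟩ := fm_two hab hcd hac had hbc hbd
      exact le_antisymm hle (hw ▸ le_fracNu hf)
    · have hle : G.fracNu ≤ 2 := by
        have hsub : ∀ x y : V, G.Adj x y → x ∈ ({u, v} : Finset V) ∨ y ∈ ({u, v} : Finset V) := by
          intro x y hxy
          rcases hcovuv x y hxy with h' | h' | h' | h' <;> simp [h']
        have := fracNu_le (G := G) fun f hf => ub_meet f hf {u, v} hsub
        rw [Finset.card_pair huv] at this
        norm_num at this
        exact this
      obtain ⟨f, hf, hw⟩ := fm_two hab hcd hac had hbc hbd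
      exact le_antisymm hle (hw ▸ le_fracNu hf)
end

section
/- Let G be a graph of order n with α'(G) = 2 and G isomorphic to K₂(0, 0; ℓ) for some ℓ ≥ 2 (so n = ℓ + 2). Then α'(G) + α'(complement of G) = (n+2)/2. -/
open Finset
open scoped Classical

/-!
The complement of `K₂(0,0;ℓ)` is a complete graph on the `ℓ = n - 2` vertices `wᵢ` together
with the two isolated vertices `u`, `v`. In any graph whose non-isolated vertices all have the
same degree `d ≥ 1`, double counting gives `2 f(G) = ∑ᵥ f(v) ≤ #{non-isolated vertices}` for
every fractional matching `f`, and the weight `1/d` on every edge attains this bound. Hence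
`α'(Gᶜ) = (n - 2)/2`, and adding `α'(G) = 2` gives `(n + 2)/2`.
-/

namespace SimpleGraph

variable {V : Type*} [Fintype V] (G : SimpleGraph V)

theorem sum_vertexWeight (f : Sym2 V → ℝ) :
    ∑ v, G.vertexWeight f v = 2 * G.fracWeight f := by
  have h_incidence : ∀ v, G.vertexWeight f v = ∑ e ∈ G.edgeFinset, if v ∈ e then f e else 0 :=
    fun v => by rw [vertexWeight, incidenceFinset_eq_filter, sum_filter]
  simp_rw [h_incidence]
  rw [sum_comm, fracWeight, mul_sum]
  refine sum_congr rfl fun e he => ?_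
  induction e using Sym2.ind with
  | _ a b =>
    have hab : a ≠ b := (mem_edgeFinset.mp he).ne
    have h_ends : univ.filter (· ∈ s(a, b)) = {a, b} := by ext x; simp [Sym2.mem_iff]
    rw [← sum_filter, h_ends, sum_const, card_pair hab]
    simp

theorem degree_eq_zero_of_forall_not_adj {v : V} (hv : ∀ w, ¬ G.Adj v w) : G.degree v = 0 := by
  rw [← card_neighborFinset_eq_degree, card_eq_zero, eq_empty_iff_forall_notMem]
  simpa using hv

theorem vertexWeight_eq_zero_of_forall_not_adj {v : V} (hv : ∀ w, ¬ G.Adj v w)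
    (f : Sym2 V → ℝ) : G.vertexWeight f v = 0 := by
  have : G.incidenceFinset v = ∅ := by
    rw [← card_eq_zero, card_incidenceFinset_eq_degree, G.degree_eq_zero_of_forall_not_adj hv]
  rw [vertexWeight, this, sum_empty]

theorem IsFracMatching.two_mul_fracWeight_le {G : SimpleGraph V} {f : Sym2 V → ℝ}
    (hf : G.IsFracMatching f) (S : Finset V) (hS : ∀ v ∉ S, ∀ w, ¬ G.Adj v w) :
    2 * G.fracWeight f ≤ #S := by
  have h_outside : ∑ v ∈ univ \ S, G.vertexWeight f v = 0 :=
    sum_eq_zero fun v hv => G.vertexWeight_eq_zero_of_forall_not_adj (hS v (by simpa using hv)) f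
  calc 2 * G.fracWeight f = ∑ v, G.vertexWeight f v := (G.sum_vertexWeight f).symm
    _ = ∑ v ∈ S, G.vertexWeight f v := by
        rw [← sum_sdiff (subset_univ S), h_outside, zero_add]
    _ ≤ ∑ _v ∈ S, (1 : ℝ) := sum_le_sum fun v _ => hf.2.2 v
    _ = #S := by simp

noncomputable def uniformWeight (d : ℕ) : Sym2 V → ℝ :=
  fun e => if e ∈ G.edgeSet then (d : ℝ)⁻¹ else 0

theorem vertexWeight_uniformWeight (d : ℕ) (v : V) :
    G.vertexWeight (G.uniformWeight d) v = G.degree v * (d : ℝ)⁻¹ := by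
  have h_const : ∀ e ∈ G.incidenceFinset v, G.uniformWeight d e = (d : ℝ)⁻¹ :=
    fun e he => if_pos (mem_edgeFinset.mp (G.incidenceFinset_subset v he))
  rw [vertexWeight, sum_congr rfl h_const, sum_const, card_incidenceFinset_eq_degree,
    nsmul_eq_mul]

variable {G}

theorem isFracMatching_uniformWeight {d : ℕ} (hd : 0 < d) (hdeg : ∀ v, G.degree v ≤ d) :
    G.IsFracMatching (G.uniformWeight d) := by
  have hd' : (0 : ℝ) < d := by exact_mod_cast hd
  refine ⟨fun e => ?_, fun e he => if_neg he, fun v => ?_⟩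
  · unfold uniformWeight
    split_ifs
    · exact ⟨by positivity, inv_le_one_of_one_le₀ (by exact_mod_cast hd)⟩
    · exact ⟨le_rfl, zero_le_one⟩
  · change G.vertexWeight _ v ≤ 1
    rw [vertexWeight_uniformWeight, mul_inv_le_iff₀ hd', one_mul]
    exact_mod_cast hdeg v

theorem fracNu_eq_of_degree_eq (S : Finset V) {d : ℕ} (hd : 0 < d)
    (hS : ∀ v ∈ S, G.degree v = d) (hSc : ∀ v ∉ S, ∀ w, ¬ G.Adj v w) :
    G.fracNu = #S / 2 := by
  have hdeg : ∀ v, G.degree v ≤ d := fun v => by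
    by_cases hv : v ∈ S
    · exact (hS v hv).le
    · simp [G.degree_eq_zero_of_forall_not_adj (hSc v hv)]
  have h_weight : 2 * G.fracWeight (G.uniformWeight d) = #S := by
    have hd' : (d : ℝ) ≠ 0 := by exact_mod_cast hd.ne'
    rw [← sum_vertexWeight, ← sum_sdiff (subset_univ S)]
    simp_rw [vertexWeight_uniformWeight]
    rw [sum_eq_zero fun v hv => by
        simp [G.degree_eq_zero_of_forall_not_adj (hSc v (by simpa using hv))],
      sum_congr rfl fun v hv => by rw [hS v hv, mul_inv_cancel₀ hd']]
    simp
  refine IsGreatest.csSup_eq ⟨⟨_, isFracMatching_uniformWeight hd hdeg, by linarith⟩, ?_⟩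
  rintro _ ⟨f, hf, rfl⟩
  linarith [hf.two_mul_fracWeight_le S hSc]

end SimpleGraph

theorem stmt_11 {V : Type*} [Fintype V] (G : SimpleGraph V)
    (hn : 4 ≤ Fintype.card V) (h2 : G.fracNu = 2)
    (hiso : ∃ u v : V, u ≠ v ∧
      ∀ x y : V, G.Adj x y ↔ (x ≠ y ∧ (x = u ∨ x = v ∨ y = u ∨ y = v))) :
    G.fracNu + Gᶜ.fracNu = ((Fintype.card V : ℝ) + 2) / 2 := by
  obtain ⟨u, v, huv, hadj⟩ := hiso
  have h_compl_adj : ∀ x y, Gᶜ.Adj x y ↔ x ≠ y ∧ x ∉ ({u, v} : Finset V) ∧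
      y ∉ ({u, v} : Finset V) := fun x y => by
    simp only [SimpleGraph.compl_adj, hadj, mem_insert, mem_singleton]
    tauto
  have h_nu : Gᶜ.fracNu = #(univ \ ({u, v} : Finset V)) / 2 := by
    refine Gᶜ.fracNu_eq_of_degree_eq _ (d := Fintype.card V - 3) (by omega)
      (fun w hw => ?_) (fun w hw x => ?_)
    · rw [← SimpleGraph.card_neighborFinset_eq_degree]
      convert_to #(univ \ insert w ({u, v} : Finset V)) = _ using 2
      · ext x
        simp only [SimpleGraph.mem_neighborFinset, h_compl_adj, mem_sdiff, mem_insert]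
        grind
      rw [card_sdiff_of_subset (subset_univ _), card_univ,
        card_insert_of_notMem (mem_sdiff.mp hw).2, card_pair huv]
    · simp_all
  rw [h2, h_nu, card_sdiff_of_subset (subset_univ _), card_univ, card_pair huv,
    Nat.cast_sub (by omega)]
  push_cast
  ring
end
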